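/- arXiv:1204.1317 — 3 statements merged into one kernel-verified Lean document; each statement's English description precedes it below -/
import Mathlib

section
/- Assume additionally r > 0, q ≥ 0 and 0 < β < 1. Let f : O → ℝ be continuous and obey the elliptic growth condition, and let g : ∂O → ℝ be continuous and obey the elliptic growth condition. If u₁ and u₂ are both continuous on cl(O), twice continuously differentiable on O, obey the elliptic growth condition on O, and satisfy A uᵢ = f on O and uᵢ = g on ∂O (i = 1, 2), then u₁ = u₂ on cl(O). -/
/-!
Uniqueness follows from a weak maximum principle for `A` applied to `±(u₁ - u₂)`. Since the
growth condition admits unbounded functions, `w = u₁ - u₂` is compared with `ε φ`, where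
`φ = e^{ay} + e^{bx} + e^{-δ²x + δy}` is a positive supersolution (`A φ ≥ 0` for `y ≥ 0`) that
outgrows the growth bound in every direction of the closed half-plane; the exponents `a` and `b`
exist exactly because `M₁ < min (r/(κθ)) (2κ/σ²)` and `M₂ < 1`. The set where `w - ε φ > 0` is
then bounded, so a positive supremum of `w - ε φ` would be attained at an interior maximum,
where the degenerate ellipticity of `A` (diffusion coefficient `y/2 ≥ 0`) and `r > 0` give
`A(w - ε φ) ≥ r (w - ε φ) > 0`, contradicting `A(w - ε φ) = -ε A φ ≤ 0`. Letting `ε → 0` gives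
`w ≤ 0`.
-/

open Real Set MeasureTheory

noncomputable section

/-- First directional derivative of `u` at `z` in direction `v`. -/
def D1 (u : ℝ × ℝ → ℝ) (z v : ℝ × ℝ) : ℝ := fderiv ℝ u z v

/-- Second directional derivative of `u` at `z` in directions `v`, `w`. -/
def D2 (u : ℝ × ℝ → ℝ) (z v w : ℝ × ℝ) : ℝ := fderiv ℝ (fun z' => fderiv ℝ u z' v) z w

/-- The elliptic Heston operator
`(Au)(x,y) = −(y/2)(u_xx + 2ρσ u_xy + σ² u_yy) − (r − q − y/2) u_x − κ(θ − y) u_y + r u`. -/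
def hestonA (σ ρ κ θ q r : ℝ) (u : ℝ × ℝ → ℝ) (z : ℝ × ℝ) : ℝ :=
  -(z.2 / 2) * (D2 u z (1, 0) (1, 0) + 2 * ρ * σ * D2 u z (1, 0) (0, 1)
      + σ ^ 2 * D2 u z (0, 1) (0, 1))
    - (r - q - z.2 / 2) * D1 u z (1, 0) - κ * (θ - z.2) * D1 u z (0, 1) + r * u z

/-- The open upper half-plane `ℍ = ℝ × (0,∞)`. -/
def HH : Set (ℝ × ℝ) := {z | 0 < z.2}

/-- `Γ₁ = ∂O ∩ ℍ`. -/
def Gamma1 (O : Set (ℝ × ℝ)) : Set (ℝ × ℝ) := frontier O ∩ HH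

/-- `Γ₀`: the interior, relative to `∂ℍ = ℝ × {0}`, of `∂ℍ ∩ ∂O`. -/
def Gamma0 (O : Set (ℝ × ℝ)) : Set (ℝ × ℝ) :=
  {z | z.2 = 0 ∧ z.1 ∈ interior {x : ℝ | (x, (0 : ℝ)) ∈ frontier O}}

/-- The elliptic growth condition: `|v(x,y)| ≤ C (1 + e^{M₁ y} + e^{M₂ x})` on `S`,
with `0 ≤ M₁ < min (r/(κθ)) μ`, `μ = 2κ/σ²`, and `M₂ ∈ [0,1)`. -/
def ellGrowth (σ κ θ r : ℝ) (S : Set (ℝ × ℝ)) (v : ℝ × ℝ → ℝ) : Prop :=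
  ∃ C M₁ M₂ : ℝ, 0 < C ∧ 0 ≤ M₁ ∧ M₁ < min (r / (κ * θ)) (2 * κ / σ ^ 2) ∧
    0 ≤ M₂ ∧ M₂ < 1 ∧ ∀ z ∈ S, |v z| ≤ C * (1 + exp (M₁ * z.2) + exp (M₂ * z.1))

open Filter Topology

namespace Heston

section Derivatives

variable {f g : ℝ × ℝ → ℝ} {z : ℝ × ℝ}

lemma differentiableAt_fderiv_of_contDiffAt (hf : ContDiffAt ℝ 2 f z) :
    DifferentiableAt ℝ (fderiv ℝ f) z :=
  (hf.fderiv_right one_add_one_eq_two.le).differentiableAt one_ne_zero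

lemma D2_eq_fderiv_fderiv (hf : ContDiffAt ℝ 2 f z) (v w : ℝ × ℝ) :
    D2 f z v w = fderiv ℝ (fderiv ℝ f) z w v := by
  rw [D2, fderiv_clm_apply (differentiableAt_fderiv_of_contDiffAt hf) (differentiableAt_const v)]
  simp

lemma D2_eq_of_fderiv_eventuallyEq {F : ℝ × ℝ → (ℝ × ℝ →L[ℝ] ℝ)} (hf : ContDiffAt ℝ 2 f z)
    (hF : fderiv ℝ f =ᶠ[𝓝 z] F) (v w : ℝ × ℝ) :
    D2 f z v w = fderiv ℝ F z w v := by
  rw [D2_eq_fderiv_fderiv hf, hF.fderiv_eq]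

lemma eventually_differentiableAt_of_contDiffAt (hf : ContDiffAt ℝ 2 f z) :
    ∀ᶠ z' in 𝓝 z, DifferentiableAt ℝ f z' :=
  (hf.eventually (by simp)).mono fun _ h => h.differentiableAt two_ne_zero

lemma D1_add (hf : DifferentiableAt ℝ f z) (hg : DifferentiableAt ℝ g z) (v : ℝ × ℝ) :
    D1 (f + g) z v = D1 f z v + D1 g z v := by
  simp [D1, fderiv_add hf hg]

lemma D1_sub (hf : DifferentiableAt ℝ f z) (hg : DifferentiableAt ℝ g z) (v : ℝ × ℝ) :
    D1 (f - g) z v = D1 f z v - D1 g z v := by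
  simp [D1, fderiv_sub hf hg]

lemma D1_const_smul (hf : DifferentiableAt ℝ f z) (c : ℝ) (v : ℝ × ℝ) :
    D1 (c • f) z v = c * D1 f z v := by
  simp [D1, fderiv_const_smul hf]

lemma D2_add (hf : ContDiffAt ℝ 2 f z) (hg : ContDiffAt ℝ 2 g z) (v w : ℝ × ℝ) :
    D2 (f + g) z v w = D2 f z v w + D2 g z v w := by
  have hF : fderiv ℝ (f + g) =ᶠ[𝓝 z] fderiv ℝ f + fderiv ℝ g := by
    filter_upwards [eventually_differentiableAt_of_contDiffAt hf,
      eventually_differentiableAt_of_contDiffAt hg]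
      with z' hf' hg' using fderiv_add hf' hg'
  rw [D2_eq_of_fderiv_eventuallyEq (f := f + g) (hf.add hg) hF, fderiv_add
    (differentiableAt_fderiv_of_contDiffAt hf) (differentiableAt_fderiv_of_contDiffAt hg),
    D2_eq_fderiv_fderiv hf, D2_eq_fderiv_fderiv hg]
  rfl

lemma D2_sub (hf : ContDiffAt ℝ 2 f z) (hg : ContDiffAt ℝ 2 g z) (v w : ℝ × ℝ) :
    D2 (f - g) z v w = D2 f z v w - D2 g z v w := by
  have hF : fderiv ℝ (f - g) =ᶠ[𝓝 z] fderiv ℝ f - fderiv ℝ g := by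
    filter_upwards [eventually_differentiableAt_of_contDiffAt hf,
      eventually_differentiableAt_of_contDiffAt hg]
      with z' hf' hg' using fderiv_sub hf' hg'
  rw [D2_eq_of_fderiv_eventuallyEq (f := f - g) (hf.sub hg) hF, fderiv_sub
    (differentiableAt_fderiv_of_contDiffAt hf) (differentiableAt_fderiv_of_contDiffAt hg),
    D2_eq_fderiv_fderiv hf, D2_eq_fderiv_fderiv hg]
  rfl

lemma D2_const_smul (hf : ContDiffAt ℝ 2 f z) (c : ℝ) (v w : ℝ × ℝ) :
    D2 (c • f) z v w = c * D2 f z v w := by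
  have hF : fderiv ℝ (c • f) =ᶠ[𝓝 z] c • fderiv ℝ f := by
    filter_upwards [eventually_differentiableAt_of_contDiffAt hf] with z' hf'
      using fderiv_const_smul hf' c
  rw [D2_eq_of_fderiv_eventuallyEq (f := c • f) (hf.const_smul c) hF,
    fderiv_const_smul (differentiableAt_fderiv_of_contDiffAt hf), D2_eq_fderiv_fderiv hf]
  rfl

variable {σ ρ κ θ q r : ℝ}

lemma hestonA_add (hf : ContDiffAt ℝ 2 f z) (hg : ContDiffAt ℝ 2 g z) :
    hestonA σ ρ κ θ q r (f + g) z = hestonA σ ρ κ θ q r f z + hestonA σ ρ κ θ q r g z := by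
  simp only [hestonA, D1_add (hf.differentiableAt two_ne_zero) (hg.differentiableAt two_ne_zero),
    D2_add hf hg, Pi.add_apply]
  ring

lemma hestonA_sub (hf : ContDiffAt ℝ 2 f z) (hg : ContDiffAt ℝ 2 g z) :
    hestonA σ ρ κ θ q r (f - g) z = hestonA σ ρ κ θ q r f z - hestonA σ ρ κ θ q r g z := by
  simp only [hestonA, D1_sub (hf.differentiableAt two_ne_zero) (hg.differentiableAt two_ne_zero),
    D2_sub hf hg, Pi.sub_apply]
  ring

lemma hestonA_const_smul (hf : ContDiffAt ℝ 2 f z) (c : ℝ) :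
    hestonA σ ρ κ θ q r (c • f) z = c * hestonA σ ρ κ θ q r f z := by
  simp only [hestonA, D1_const_smul (hf.differentiableAt two_ne_zero), D2_const_smul hf,
    Pi.smul_apply, smul_eq_mul]
  ring

end Derivatives

section Exponentials

def expLin (α β : ℝ) (z : ℝ × ℝ) : ℝ := exp (α * z.1 + β * z.2)

variable (α β : ℝ)

lemma expLin_pos (z : ℝ × ℝ) : 0 < expLin α β z := exp_pos _

lemma hasFDerivAt_expLin (z : ℝ × ℝ) :
    HasFDerivAt (expLin α β)
      (expLin α β z • (α • ContinuousLinearMap.fst ℝ ℝ ℝ + β • ContinuousLinearMap.snd ℝ ℝ ℝ))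
      z :=
  (((hasFDerivAt_fst).const_smul α).add ((hasFDerivAt_snd).const_smul β)).exp

lemma contDiff_expLin : ContDiff ℝ 2 (expLin α β) :=
  ((contDiff_fst.const_smul α).add (contDiff_snd.const_smul β)).exp

lemma D1_expLin (z v : ℝ × ℝ) : D1 (expLin α β) z v = (α * v.1 + β * v.2) * expLin α β z := by
  simp only [D1, (hasFDerivAt_expLin α β z).fderiv, smul_add, add_apply, smul_apply,
    ContinuousLinearMap.coe_fst', ContinuousLinearMap.coe_snd', smul_eq_mul]
  ring

lemma D2_expLin (z v w : ℝ × ℝ) :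
    D2 (expLin α β) z v w = (α * v.1 + β * v.2) * (α * w.1 + β * w.2) * expLin α β z := by
  have h : (fun z' => fderiv ℝ (expLin α β) z' v) = (α * v.1 + β * v.2) • expLin α β := by
    funext z'
    exact D1_expLin α β z' v
  simp only [D2, h, fderiv_const_smul (hasFDerivAt_expLin α β z).differentiableAt,
    (hasFDerivAt_expLin α β z).fderiv, smul_add, add_apply, smul_apply,
    ContinuousLinearMap.coe_fst', ContinuousLinearMap.coe_snd', smul_eq_mul]
  ring

lemma hestonA_expLin (σ ρ κ θ q r : ℝ) (z : ℝ × ℝ) :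
    hestonA σ ρ κ θ q r (expLin α β) z =
      ((-(α ^ 2 + 2 * ρ * σ * α * β + σ ^ 2 * β ^ 2) / 2 + α / 2 + κ * β) * z.2
        + (r - (r - q) * α - κ * θ * β)) * expLin α β z := by
  simp only [hestonA, D1_expLin, D2_expLin]
  ring

end Exponentials

section SecondDerivativeTest

lemma deriv_deriv_nonpos_of_isLocalMax {g : ℝ → ℝ} {t : ℝ} (hc : ContinuousAt g t)
    (hmax : IsLocalMax g t) : deriv (deriv g) t ≤ 0 := by
  by_contra! hpos
  have hmin : IsLocalMin g t := isLocalMin_of_deriv_deriv_pos hpos hmax.deriv_eq_zero hc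
  have hconst : g =ᶠ[𝓝 t] fun _ => g t := by
    filter_upwards [hmin, hmax] with s hs₁ hs₂ using le_antisymm hs₂ hs₁
  have hderiv : deriv g =ᶠ[𝓝 t] fun _ => 0 := by
    filter_upwards [hconst.eventuallyEq_nhds] with s hs
    rw [hs.deriv_eq, deriv_const]
  simp [hderiv.deriv_eq] at hpos

lemma D2_self_nonpos_of_isLocalMax {f : ℝ × ℝ → ℝ} {z : ℝ × ℝ} (hf : ContDiffAt ℝ 2 f z)
    (hmax : IsLocalMax f z) (p : ℝ × ℝ) : D2 f z p p ≤ 0 := by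
  set L : ℝ → ℝ × ℝ := fun t => z + t • p
  have hL : ∀ t, HasDerivAt L p t := fun t => by
    simpa only [one_smul] using ((hasDerivAt_id' t).smul_const p).const_add z
  have hLz : Tendsto L (𝓝 0) (𝓝 z) := by
    simpa [L] using (hL 0).continuousAt.tendsto
  have hderiv : deriv (f ∘ L) =ᶠ[𝓝 0] fun t => fderiv ℝ f (L t) p := by
    filter_upwards [hLz.eventually (eventually_differentiableAt_of_contDiffAt hf)] with t ht
    exact (ht.hasFDerivAt.comp_hasDerivAt t (hL t)).deriv
  have hD2 : HasDerivAt (fun t => fderiv ℝ f (L t) p) (D2 f z p p) 0 := by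
    have hd : DifferentiableAt ℝ (fun z' => fderiv ℝ f z' p) (L 0) := by
      simpa [L] using (differentiableAt_fderiv_of_contDiffAt hf).clm_apply
        (differentiableAt_const p)
    simpa [L, D2, Function.comp_def] using hd.hasFDerivAt.comp_hasDerivAt 0 (hL 0)
  have hmax' : IsLocalMax (f ∘ L) 0 := by
    filter_upwards [hLz.eventually hmax] with t ht
    simpa [L] using ht
  have hc : ContinuousAt (f ∘ L) 0 := by
    refine ContinuousAt.comp ?_ (hL 0).continuousAt
    simpa [L] using hf.continuousAt
  simpa [hderiv.deriv_eq, hD2.deriv] using deriv_deriv_nonpos_of_isLocalMax hc hmax'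

end SecondDerivativeTest

lemma mul_le_hestonA_of_isLocalMax {σ ρ κ θ q r : ℝ} {v : ℝ × ℝ → ℝ} {z : ℝ × ℝ}
    (hρ : |ρ| ≤ 1) (hy : 0 ≤ z.2) (hv : ContDiffAt ℝ 2 v z) (hmax : IsLocalMax v z) :
    r * v z ≤ hestonA σ ρ κ θ q r v z := by
  have hD1 : ∀ p, D1 v z p = 0 := fun p => by simp [D1, hmax.fderiv_eq_zero]
  have hsymm := hv.isSymmSndFDerivAt (by simp [minSmoothness_of_isRCLikeNormedField]) (1, 0) (0, 1)
  -- `ξ₁² + 2ρσ ξ₁ξ₂ + σ² ξ₂² = (ξ₁ + ρσ ξ₂)² + (1 - ρ²) σ² ξ₂²`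
  have htrace : D2 v z (1, 0) (1, 0) + 2 * ρ * σ * D2 v z (1, 0) (0, 1)
      + σ ^ 2 * D2 v z (0, 1) (0, 1)
      = D2 v z (1, ρ * σ) (1, ρ * σ) + (1 - ρ ^ 2) * σ ^ 2 * D2 v z (0, 1) (0, 1) := by
    have hp : ((1 : ℝ), ρ * σ) = ((1 : ℝ), (0 : ℝ)) + (ρ * σ) • ((0 : ℝ), (1 : ℝ)) := by simp
    simp only [D2_eq_fderiv_fderiv hv, hp, map_add, map_smul, add_apply,
      smul_apply, smul_eq_mul]
    rw [hsymm]
    ring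
  have hρ2 : 0 ≤ 1 - ρ ^ 2 := sub_nonneg.2 ((sq_le_one_iff_abs_le_one ρ).2 hρ)
  have hdiff : D2 v z (1, 0) (1, 0) + 2 * ρ * σ * D2 v z (1, 0) (0, 1)
      + σ ^ 2 * D2 v z (0, 1) (0, 1) ≤ 0 := by
    rw [htrace]
    have := D2_self_nonpos_of_isLocalMax hv hmax (1, ρ * σ)
    have := D2_self_nonpos_of_isLocalMax hv hmax (0, 1)
    nlinarith [mul_nonneg hρ2 (sq_nonneg σ)]
  simp only [hestonA, hD1, mul_zero, sub_zero]
  nlinarith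

section Growth

lemma exists_mul_exp_le_add (C : ℝ) {ε m a : ℝ} (hε : 0 < ε) (hm : 0 ≤ m) (hma : m < a) :
    ∃ K, ∀ t, C * exp (m * t) ≤ ε * exp (a * t) + K := by
  -- past `T`, `e^{(a - m) t} ≥ (a - m) t ≥ |C| / ε`; before `T`, `C e^{m t} ≤ |C| e^{m T}`
  set T := |C| / (ε * (a - m))
  refine ⟨|C| * exp (m * T), fun t => ?_⟩
  have hC : C * exp (m * t) ≤ |C| * exp (m * t) :=
    mul_le_mul_of_nonneg_right (le_abs_self C) (exp_pos _).le
  rcases le_total t T with ht | ht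
  · have : exp (m * t) ≤ exp (m * T) := exp_le_exp.2 (mul_le_mul_of_nonneg_left ht hm)
    nlinarith [abs_nonneg C, exp_pos (a * t)]
  · have hT : |C| ≤ ε * ((a - m) * t) := by
      have := mul_le_mul_of_nonneg_left ht (mul_pos hε (sub_pos.2 hma)).le
      rwa [mul_div_cancel₀ _ (mul_pos hε (sub_pos.2 hma)).ne', mul_assoc] at this
    have hexp : |C| ≤ ε * exp ((a - m) * t) := by nlinarith [add_one_le_exp ((a - m) * t)]
    have : |C| * exp (m * t) ≤ ε * exp (a * t) := by
      calc |C| * exp (m * t) ≤ ε * exp ((a - m) * t) * exp (m * t) :=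
            mul_le_mul_of_nonneg_right hexp (exp_pos _).le
        _ = ε * exp (a * t) := by rw [mul_assoc, ← exp_add]; ring_nf
    nlinarith [mul_nonneg (abs_nonneg C) (exp_pos (m * T)).le]

lemma isBounded_exp_sublevel {a b c : ℝ} (ha : 0 < a) (hb : 0 < b) (hc : 0 < c) (R : ℝ) :
    Bornology.IsBounded
      {z : ℝ × ℝ | 0 ≤ z.2 ∧ exp (a * z.2) + exp (b * z.1) + exp (-(c * z.1)) ≤ R} := by
  refine ((Metric.isBounded_Icc (-(R / c)) (R / b)).prod (Metric.isBounded_Icc 0 (R / a))).subset ?_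
  rintro ⟨x, y⟩ ⟨hy, hR⟩
  dsimp only at hy hR
  have := add_one_le_exp (a * y)
  have := add_one_le_exp (b * x)
  have := add_one_le_exp (-(c * x))
  have := exp_pos (a * y)
  have := exp_pos (b * x)
  have := exp_pos (-(c * x))
  refine ⟨⟨?_, ?_⟩, hy, ?_⟩
  · rw [neg_le, le_div_iff₀ hc]; linarith
  · rw [le_div_iff₀ hb]; linarith
  · rw [le_div_iff₀ ha]; linarith

lemma mul_one_add_exp_add_exp_le {C M M' N N' : ℝ} (hC : 0 ≤ C) (hM : 0 ≤ M) (hMM' : M ≤ M')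
    (hN : 0 ≤ N) (hNN' : N ≤ N') (x y : ℝ) :
    C * (1 + exp (M * y) + exp (N * x)) ≤ 3 * C * (1 + exp (M' * y) + exp (N' * x)) := by
  have key : ∀ {K K' : ℝ}, 0 ≤ K → K ≤ K' → ∀ t, exp (K * t) ≤ 1 + exp (K' * t) := by
    intro K K' hK hKK' t
    rcases le_total 0 t with ht | ht
    · linarith [exp_le_exp.2 (mul_le_mul_of_nonneg_right hKK' ht), exp_pos 1]
    · linarith [exp_le_one_iff.2 (mul_nonpos_of_nonneg_of_nonpos hK ht), exp_pos (K' * t)]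
  have := key hM hMM' y
  have := key hN hNN' x
  have := exp_pos (M' * y)
  have := exp_pos (N' * x)
  nlinarith

lemma ellGrowth_sub {σ κ θ r : ℝ} {S : Set (ℝ × ℝ)} {u v : ℝ × ℝ → ℝ}
    (hu : ellGrowth σ κ θ r S u) (hv : ellGrowth σ κ θ r S v) :
    ellGrowth σ κ θ r S (u - v) := by
  obtain ⟨C, M, N, hC, hM, hM', hN, hN', hu⟩ := hu
  obtain ⟨D, M₁, N₁, hD, hM₁, hM₁', hN₁, hN₁', hv⟩ := hv
  refine ⟨3 * (C + D), max M M₁, max N N₁, by positivity, le_max_of_le_left hM, max_lt hM' hM₁',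
    le_max_of_le_left hN, max_lt hN' hN₁', fun z hz => ?_⟩
  calc |(u - v) z| ≤ |u z| + |v z| := abs_sub _ _
    _ ≤ C * (1 + exp (M * z.2) + exp (N * z.1)) + D * (1 + exp (M₁ * z.2) + exp (N₁ * z.1)) :=
        add_le_add (hu z hz) (hv z hz)
    _ ≤ 3 * (C + D) * (1 + exp (max M M₁ * z.2) + exp (max N N₁ * z.1)) := by
        have := mul_one_add_exp_add_exp_le hC.le hM (le_max_left M M₁) hN (le_max_left N N₁)
          z.1 z.2
        have := mul_one_add_exp_add_exp_le hD.le hM₁ (le_max_right M M₁) hN₁ (le_max_right N N₁)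
          z.1 z.2
        linarith

end Growth

section Supersolution

variable {σ ρ κ θ q r : ℝ}

lemma hestonA_expLin_nonneg {α β : ℝ} {z : ℝ × ℝ} (hy : 0 ≤ z.2)
    (h₁ : 0 ≤ -(α ^ 2 + 2 * ρ * σ * α * β + σ ^ 2 * β ^ 2) / 2 + α / 2 + κ * β)
    (h₀ : 0 ≤ r - (r - q) * α - κ * θ * β) :
    0 ≤ hestonA σ ρ κ θ q r (expLin α β) z := by
  rw [hestonA_expLin]
  exact mul_nonneg (add_nonneg (mul_nonneg h₁ hy) h₀) (expLin_pos α β z).le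

/-- For small `δ > 0` the `y`-coefficient of `A e^{-δ²x + δy}` is `κδ + O(δ²)` and its constant
term is `r + O(δ)`. -/
lemma exists_hestonA_expLin_neg_sq_nonneg (hκ : 0 < κ) (hr : 0 < r) :
    ∃ δ > 0, ∀ z : ℝ × ℝ, 0 ≤ z.2 → 0 ≤ hestonA σ ρ κ θ q r (expLin (-δ ^ 2) δ) z := by
  have h₁ : ∀ᶠ δ in 𝓝 (0 : ℝ), 0 < κ - δ * (δ ^ 2 - 2 * ρ * σ * δ + σ ^ 2 + 1) / 2 :=
    continuousAt_const.eventually_lt (by fun_prop) (by simpa using hκ)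
  have h₀ : ∀ᶠ δ in 𝓝 (0 : ℝ), 0 < r + (r - q) * δ ^ 2 - κ * θ * δ :=
    continuousAt_const.eventually_lt (by fun_prop) (by simpa using hr)
  obtain ⟨δ, ⟨hδ₁, hδ₀⟩, hδ⟩ :=
    (((h₁.and h₀).filter_mono nhdsWithin_le_nhds).and (self_mem_nhdsWithin (s := Ioi 0))).exists
  refine ⟨δ, hδ, fun z hy => hestonA_expLin_nonneg hy ?_ ?_⟩
  · nlinarith [mul_pos (mem_Ioi.1 hδ) hδ₁]
  · nlinarith

lemma exists_hestonA_supersolution {M₁ M₂ : ℝ} (hκ : 0 < κ) (hθ : 0 < θ) (hr : 0 < r)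
    (hq : 0 ≤ q) (hM₁0 : 0 ≤ M₁) (hM₁ : M₁ < min (r / (κ * θ)) (2 * κ / σ ^ 2))
    (hM₂0 : 0 ≤ M₂) (hM₂ : M₂ < 1) :
    ∃ φ : ℝ × ℝ → ℝ, ContDiff ℝ 2 φ ∧ (∀ z, 0 < φ z) ∧
      (∀ z, 0 ≤ z.2 → 0 ≤ hestonA σ ρ κ θ q r φ z) ∧
      ∀ C ε, 0 < ε → Bornology.IsBounded
        {z : ℝ × ℝ | 0 ≤ z.2 ∧ ε * φ z ≤ C * (1 + exp (M₁ * z.2) + exp (M₂ * z.1))} := by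
  set a := min (r / (κ * θ)) (2 * κ / σ ^ 2)
  have ha : 0 < a := hM₁0.trans_lt hM₁
  have haθ : a * (κ * θ) ≤ r := mul_le_of_le_div₀ hr.le (by positivity) (min_le_left _ _)
  have haσ : a * σ ^ 2 ≤ 2 * κ := mul_le_of_le_div₀ (by positivity) (sq_nonneg σ) (min_le_right _ _)
  obtain ⟨b, hb, hb1⟩ := exists_between hM₂
  have hb0 : 0 < b := hM₂0.trans_lt hb
  obtain ⟨δ, hδ, hAδ⟩ := exists_hestonA_expLin_neg_sq_nonneg (σ := σ) (ρ := ρ) (θ := θ) (q := q)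
    hκ hr
  refine ⟨expLin 0 a + expLin b 0 + expLin (-δ ^ 2) δ,
    ((contDiff_expLin _ _).add (contDiff_expLin _ _)).add (contDiff_expLin _ _),
    fun z => add_pos (add_pos (expLin_pos _ _ z) (expLin_pos _ _ z)) (expLin_pos _ _ z),
    fun z hy => ?_, fun C ε hε => ?_⟩
  · have hd : ∀ α β, ContDiffAt ℝ 2 (expLin α β) z := fun α β => (contDiff_expLin α β).contDiffAt
    rw [hestonA_add (f := expLin 0 a + expLin b 0) ((hd _ _).add (hd _ _)) (hd _ _),
      hestonA_add (hd _ _) (hd _ _)]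
    refine add_nonneg (add_nonneg (hestonA_expLin_nonneg hy ?_ ?_)
      (hestonA_expLin_nonneg hy ?_ ?_)) (hAδ z hy) <;> nlinarith
  · obtain ⟨K₁, hK₁⟩ := exists_mul_exp_le_add C (half_pos hε) hM₁0 hM₁
    obtain ⟨K₂, hK₂⟩ := exists_mul_exp_le_add C (half_pos hε) hM₂0 hb
    refine (isBounded_exp_sublevel ha hb0 (pow_pos hδ 2)
      (2 * (C + K₁ + K₂) / ε)).subset ?_
    rintro z ⟨hy, hz⟩
    refine ⟨hy, ?_⟩
    simp only [expLin, Pi.add_apply, zero_mul, zero_add, add_zero] at hz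
    have : exp (-(δ ^ 2 * z.1)) ≤ exp (-δ ^ 2 * z.1 + δ * z.2) :=
      exp_le_exp.2 (by nlinarith [mul_nonneg hδ.le hy])
    rw [le_div_iff₀ hε]
    nlinarith [hK₁ z.2, hK₂ z.1, mul_le_mul_of_nonneg_left this hε.le,
      mul_pos hε (exp_pos (-(δ ^ 2 * z.1)))]

end Supersolution

section MaximumPrinciple

lemma nonpos_of_isLocalMax_imp_nonpos {E : Type*} [PseudoMetricSpace E] [ProperSpace E]
    {O : Set E} {v : E → ℝ} (hO : IsOpen O) (hv : ContinuousOn v (closure O))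
    (hfr : ∀ z ∈ frontier O, v z ≤ 0) (hbdd : Bornology.IsBounded {z ∈ O | 0 < v z})
    (hmax : ∀ z ∈ O, IsLocalMax v z → v z ≤ 0) :
    ∀ z ∈ closure O, v z ≤ 0 := by
  intro p hp
  by_contra! hvp
  set S := closure O ∩ v ⁻¹' Ici (v p)
  have hSO : S ⊆ {z ∈ O | 0 < v z} := fun z ⟨hz, hpz⟩ => by
    refine ⟨by_contra fun hzO => ?_, hvp.trans_le hpz⟩
    exact (hfr z (hO.frontier_eq ▸ ⟨hz, hzO⟩)).not_gt (hvp.trans_le hpz)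
  have hS : IsCompact S := Metric.isCompact_of_isClosed_isBounded
    (hv.preimage_isClosed_of_isClosed isClosed_closure isClosed_Ici) (hbdd.subset hSO)
  obtain ⟨z₀, hz₀, hz₀max⟩ := hS.exists_isMaxOn ⟨p, hp, le_refl (v p)⟩ (hv.mono inter_subset_left)
  have hz₀O := hSO hz₀
  have hloc : IsLocalMax v z₀ := by
    filter_upwards [hO.mem_nhds hz₀O.1] with z hz
    by_cases hpz : v p ≤ v z
    · exact hz₀max ⟨subset_closure hz, hpz⟩
    · exact (not_le.1 hpz).le.trans hz₀.2
  exact (hmax z₀ hz₀O.1 hloc).not_gt hz₀O.2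

variable {σ ρ κ θ q r : ℝ}

theorem hestonA_weak_maximum_principle (hρ : |ρ| ≤ 1) (hκ : 0 < κ) (hθ : 0 < θ) (hr : 0 < r)
    (hq : 0 ≤ q) {O : Set (ℝ × ℝ)} (hO : IsOpen O) (hOsub : O ⊆ HH) {w : ℝ × ℝ → ℝ}
    (hwc : ContinuousOn w (closure O)) (hwd : ContDiffOn ℝ 2 w O)
    (hwg : ellGrowth σ κ θ r O w) (hAw : ∀ z ∈ O, hestonA σ ρ κ θ q r w z ≤ 0)
    (hwb : ∀ z ∈ frontier O, w z ≤ 0) :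
    ∀ z ∈ closure O, w z ≤ 0 := by
  obtain ⟨C, M₁, M₂, -, hM₁0, hM₁, hM₂0, hM₂, hw_le⟩ := hwg
  obtain ⟨φ, hφ, hφpos, hAφ, hφbdd⟩ :=
    exists_hestonA_supersolution (ρ := ρ) (q := q) hκ hθ hr hq hM₁0 hM₁ hM₂0 hM₂
  have hpert : ∀ ε : ℝ, 0 < ε → ∀ z ∈ closure O, (w - ε • φ) z ≤ 0 := by
    intro ε hε
    refine nonpos_of_isLocalMax_imp_nonpos hO (hwc.sub (hφ.continuous.continuousOn.const_smul ε))
      (fun z hz => ?_) ((hφbdd C ε hε).subset fun z ⟨hz, hpos⟩ => ⟨(hOsub hz).le, ?_⟩)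
      fun z hz hmax => ?_
    · simpa using (hwb z hz).trans (mul_pos hε (hφpos z)).le
    · simp only [Pi.sub_apply, Pi.smul_apply, smul_eq_mul, sub_pos] at hpos
      exact hpos.le.trans ((le_abs_self _).trans (hw_le z hz))
    · have hwz : ContDiffAt ℝ 2 w z := hwd.contDiffAt (hO.mem_nhds hz)
      have hφz : ContDiffAt ℝ 2 (ε • φ) z := hφ.contDiffAt.const_smul ε
      have : r * (w - ε • φ) z ≤ hestonA σ ρ κ θ q r (w - ε • φ) z :=
        mul_le_hestonA_of_isLocalMax hρ (hOsub hz).le (hwz.sub hφz) hmax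
      rw [hestonA_sub hwz hφz, hestonA_const_smul hφ.contDiffAt] at this
      nlinarith [hAw z hz, hAφ z (hOsub hz).le]
  intro z hz
  refine le_of_forall_pos_le_add fun δ hδ => ?_
  have := hpert (δ / φ z) (div_pos hδ (hφpos z)) z hz
  simp only [Pi.sub_apply, Pi.smul_apply, smul_eq_mul, div_mul_cancel₀ δ (hφpos z).ne'] at this
  linarith

theorem hestonA_comparison (hρ : |ρ| ≤ 1) (hκ : 0 < κ) (hθ : 0 < θ) (hr : 0 < r) (hq : 0 ≤ q)
    {O : Set (ℝ × ℝ)} (hO : IsOpen O) (hOsub : O ⊆ HH) {u v : ℝ × ℝ → ℝ}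
    (huc : ContinuousOn u (closure O)) (hud : ContDiffOn ℝ 2 u O) (hug : ellGrowth σ κ θ r O u)
    (hvc : ContinuousOn v (closure O)) (hvd : ContDiffOn ℝ 2 v O) (hvg : ellGrowth σ κ θ r O v)
    (hA : ∀ z ∈ O, hestonA σ ρ κ θ q r u z ≤ hestonA σ ρ κ θ q r v z)
    (hb : ∀ z ∈ frontier O, u z ≤ v z) :
    ∀ z ∈ closure O, u z ≤ v z := by
  refine fun z hz => sub_nonpos.1 (hestonA_weak_maximum_principle hρ hκ hθ hr hq hO hOsub
    (huc.sub hvc) (hud.sub hvd) (ellGrowth_sub hug hvg) (fun z hz => ?_)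
    (fun z hz => sub_nonpos.2 (hb z hz)) z hz)
  rw [hestonA_sub (hud.contDiffAt (hO.mem_nhds hz)) (hvd.contDiffAt (hO.mem_nhds hz))]
  exact sub_nonpos.2 (hA z hz)

end MaximumPrinciple

end Heston

theorem heston_elliptic_bvp_uniqueness_beta_lt_one_general
    (σ ρ κ θ q r : ℝ) (hρ₁ : -1 < ρ) (hρ₂ : ρ < 1)
    (hκ : 0 < κ) (hθ : 0 < θ) (hr : 0 < r) (hq : 0 ≤ q)
    (O : Set (ℝ × ℝ)) (hO : IsOpen O) (hOsub : O ⊆ HH)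
    (f g u₁ u₂ : ℝ × ℝ → ℝ)
    (hu₁c : ContinuousOn u₁ (closure O)) (hu₁d : ContDiffOn ℝ 2 u₁ O)
    (hu₁g : ellGrowth σ κ θ r O u₁)
    (hu₁eq : ∀ z ∈ O, hestonA σ ρ κ θ q r u₁ z = f z)
    (hu₁b : ∀ z ∈ frontier O, u₁ z = g z)
    (hu₂c : ContinuousOn u₂ (closure O)) (hu₂d : ContDiffOn ℝ 2 u₂ O)
    (hu₂g : ellGrowth σ κ θ r O u₂)
    (hu₂eq : ∀ z ∈ O, hestonA σ ρ κ θ q r u₂ z = f z)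
    (hu₂b : ∀ z ∈ frontier O, u₂ z = g z) :
    EqOn u₁ u₂ (closure O) := by
  have hρ : |ρ| ≤ 1 := abs_le.2 ⟨hρ₁.le, hρ₂.le⟩
  refine fun z hz => le_antisymm ?_ ?_
  · exact Heston.hestonA_comparison hρ hκ hθ hr hq hO hOsub hu₁c hu₁d hu₁g hu₂c hu₂d hu₂g
      (fun z hz => by rw [hu₁eq z hz, hu₂eq z hz]) (fun z hz => by rw [hu₁b z hz, hu₂b z hz]) z hz
  · exact Heston.hestonA_comparison hρ hκ hθ hr hq hO hOsub hu₂c hu₂d hu₂g hu₁c hu₁d hu₁g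
      (fun z hz => by rw [hu₁eq z hz, hu₂eq z hz]) (fun z hz => by rw [hu₁b z hz, hu₂b z hz]) z hz

/-- Uniqueness of solutions to the elliptic Heston boundary value problem with full
Dirichlet boundary condition, when `0 < β < 1`. -/
theorem heston_elliptic_bvp_uniqueness_beta_lt_one
    (σ ρ κ θ q r : ℝ) (hσ : σ ≠ 0) (hρ₁ : -1 < ρ) (hρ₂ : ρ < 1)
    (hκ : 0 < κ) (hθ : 0 < θ) (hr : 0 < r) (hq : 0 ≤ q)
    (hβ₀ : 0 < 2 * κ * θ / σ ^ 2) (hβ₁ : 2 * κ * θ / σ ^ 2 < 1)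
    (O : Set (ℝ × ℝ)) (hO : IsOpen O) (hOconn : IsConnected O) (hOsub : O ⊆ HH)
    (hΓ₀ : (Gamma0 O).Nonempty)
    (f g u₁ u₂ : ℝ × ℝ → ℝ)
    (hf : ContinuousOn f O) (hfg : ellGrowth σ κ θ r O f)
    (hg : ContinuousOn g (frontier O)) (hgg : ellGrowth σ κ θ r (frontier O) g)
    (hu₁c : ContinuousOn u₁ (closure O)) (hu₁d : ContDiffOn ℝ 2 u₁ O)
    (hu₁g : ellGrowth σ κ θ r O u₁)
    (hu₁eq : ∀ z ∈ O, hestonA σ ρ κ θ q r u₁ z = f z)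
    (hu₁b : ∀ z ∈ frontier O, u₁ z = g z)
    (hu₂c : ContinuousOn u₂ (closure O)) (hu₂d : ContDiffOn ℝ 2 u₂ O)
    (hu₂g : ellGrowth σ κ θ r O u₂)
    (hu₂eq : ∀ z ∈ O, hestonA σ ρ κ θ q r u₂ z = f z)
    (hu₂b : ∀ z ∈ frontier O, u₂ z = g z) :
    EqOn u₁ u₂ (closure O) :=
  heston_elliptic_bvp_uniqueness_beta_lt_one_general σ ρ κ θ q r hρ₁ hρ₂ hκ hθ hr hq O hO hOsub f g
    u₁ u₂ hu₁c hu₁d hu₁g hu₁eq hu₁b hu₂c hu₂d hu₂g hu₂eq hu₂b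

end
end

section
/- Assume additionally r > 0, q ≥ 0 and 0 < β < 1. Let f : O → ℝ be continuous and obey the elliptic growth condition, let ψ be continuous on cl(O) and obey the elliptic growth condition, and let g : ∂O → ℝ be continuous, obey the elliptic growth condition, and satisfy ψ ≤ g on ∂O. If u₁ and u₂ are both continuous on cl(O), twice continuously differentiable on O, each uᵢ and A uᵢ obey the elliptic growth condition on O, and each uᵢ satisfies min{A uᵢ − f, uᵢ − ψ} = 0 on O and uᵢ = g on ∂O (i = 1, 2), then u₁ = u₂ on cl(O). -/
/-!
Where `w = u₁ - u₂` is positive, `u₁` lies strictly above the obstacle, so `A u₁ = f ≤ A u₂` and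
`w` is a subsolution there. A weak maximum principle then gives `w ≤ 0`. Because `O` may be
unbounded, it is proved with the barrier `h = e^{my} + e^{ax} + e^{-bx+my}`: for suitable
`m, a, b` it satisfies `A h ≥ 0` on `ℍ` and outgrows every function of elliptic growth, so
`w - δh` attains its maximum on `cl(O)`; at a positive maximum, necessarily in `O`, the
second-order conditions give `A (w - δh) ≥ r (w - δh) > 0`, a contradiction. Letting `δ → 0`
and exchanging `u₁`, `u₂` gives uniqueness.
-/

open Real Set MeasureTheory

noncomputable section

/-- `min{Au − f, u − ψ} = 0` on `O`: `Au ≥ f` and `u ≥ ψ` on `O`, and at each point of `O`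
at least one of `Au = f`, `u = ψ` holds. -/
def obstacleProblem (σ ρ κ θ q r : ℝ) (O : Set (ℝ × ℝ)) (f ψ u : ℝ × ℝ → ℝ) : Prop :=
  ∀ z ∈ O, f z ≤ hestonA σ ρ κ θ q r u z ∧ ψ z ≤ u z ∧
    (hestonA σ ρ κ θ q r u z = f z ∨ u z = ψ z)

open Filter Topology

section SecondDerivativeTest

variable {E : Type*} [NormedAddCommGroup E] [NormedSpace ℝ E]

theorem IsLocalMax.deriv_deriv_nonpos {g : ℝ → ℝ} {t : ℝ} (h : IsLocalMax g t)
    (hc : ContinuousAt g t) : deriv (deriv g) t ≤ 0 := by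
  by_contra! hpos
  -- The second-derivative test makes `t` a local minimum as well, so `g` is locally constant.
  have hconst : g =ᶠ[𝓝 t] fun _ => g t := by
    filter_upwards [h, isLocalMin_of_deriv_deriv_pos hpos h.deriv_eq_zero hc] with s hmax hmin
    exact le_antisymm hmax hmin
  have : deriv (deriv g) t = 0 := by
    rw [hconst.deriv.deriv_eq]
    simp
  exact hpos.ne' this

theorem IsLocalMax.fderiv_fderiv_apply_self_nonpos {v : E → ℝ} {z : E} (h : IsLocalMax v z)
    (hv : ContDiffAt ℝ 2 v z) (e : E) : fderiv ℝ (fderiv ℝ v) z e e ≤ 0 := by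
  have hline : ∀ t : ℝ, HasDerivAt (fun s : ℝ => z + s • e) e t := fun t => by
    simpa using ((hasDerivAt_id t).smul_const e).const_add z
  have hz : z + (0 : ℝ) • e = z := by simp
  have hline_tendsto : Tendsto (fun s : ℝ => z + s • e) (𝓝 0) (𝓝 z) := by
    simpa [hz] using (hline 0).continuousAt.tendsto
  have hderiv : deriv (fun s : ℝ => v (z + s • e)) =ᶠ[𝓝 0]
      fun s => fderiv ℝ v (z + s • e) e := by
    filter_upwards [hline_tendsto.eventually (hv.eventually (by norm_num))] with s hs
    exact ((hs.differentiableAt (by norm_num)).hasFDerivAt.comp_hasDerivAt s (hline s)).deriv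
  have hfd : DifferentiableAt ℝ (fderiv ℝ v) z :=
    (hv.fderiv_right (m := 1) (by norm_num)).differentiableAt (by norm_num)
  have hsecond : HasDerivAt (fun s : ℝ => fderiv ℝ v (z + s • e) e)
      (fderiv ℝ (fderiv ℝ v) z e e) 0 := by
    simpa [Function.comp_def] using
      (hfd.hasFDerivAt.clm_apply (hasFDerivAt_const e z)).comp_hasDerivAt_of_eq 0 (hline 0)
        hz.symm
  have hmax : IsLocalMax (fun s : ℝ => v (z + s • e)) 0 := by
    simpa [IsLocalMax, IsMaxFilter] using hline_tendsto.eventually h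
  rw [← hsecond.deriv, ← hderiv.deriv_eq]
  exact hmax.deriv_deriv_nonpos (hv.continuousAt.comp_of_eq (hline 0).continuousAt hz)

end SecondDerivativeTest

section HestonOperator

variable {σ ρ κ θ q r : ℝ} {u v : ℝ × ℝ → ℝ} {z : ℝ × ℝ}

theorem D1_eq_iteratedFDeriv (a : ℝ × ℝ) : D1 u z a = iteratedFDeriv ℝ 1 u z ![a] := by
  simp [D1, iteratedFDeriv_one_apply]

theorem D2_eq_fderiv_fderiv (hu : DifferentiableAt ℝ (fderiv ℝ u) z) (a b : ℝ × ℝ) :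
    D2 u z a b = fderiv ℝ (fderiv ℝ u) z b a := by
  simp [D2, (hu.hasFDerivAt.clm_apply (hasFDerivAt_const a z)).fderiv]

theorem D2_eq_iteratedFDeriv (hu : ContDiffAt ℝ 2 u z) (a b : ℝ × ℝ) :
    D2 u z a b = iteratedFDeriv ℝ 2 u z ![b, a] := by
  rw [iteratedFDeriv_two_apply, D2_eq_fderiv_fderiv
    ((hu.fderiv_right (m := 1) le_rfl).differentiableAt one_ne_zero)]
  rfl

theorem hestonA_add (hu : ContDiffAt ℝ 2 u z) (hv : ContDiffAt ℝ 2 v z) :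
    hestonA σ ρ κ θ q r (u + v) z = hestonA σ ρ κ θ q r u z + hestonA σ ρ κ θ q r v z := by
  have huv : ContDiffAt ℝ 2 (u + v) z := hu.add hv
  simp only [hestonA, D1_eq_iteratedFDeriv, D2_eq_iteratedFDeriv hu, D2_eq_iteratedFDeriv hv,
    D2_eq_iteratedFDeriv huv, iteratedFDeriv_add_apply (i := 2) hu hv,
    iteratedFDeriv_add_apply (i := 1) (hu.of_le one_le_two) (hv.of_le one_le_two),
    add_apply, Pi.add_apply]
  ring

theorem hestonA_sub (hu : ContDiffAt ℝ 2 u z) (hv : ContDiffAt ℝ 2 v z) :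
    hestonA σ ρ κ θ q r (u - v) z = hestonA σ ρ κ θ q r u z - hestonA σ ρ κ θ q r v z := by
  have huv : ContDiffAt ℝ 2 (u - v) z := hu.sub hv
  simp only [hestonA, D1_eq_iteratedFDeriv, D2_eq_iteratedFDeriv hu, D2_eq_iteratedFDeriv hv,
    D2_eq_iteratedFDeriv huv, iteratedFDeriv_sub_apply (i := 2) hu hv,
    iteratedFDeriv_sub_apply (i := 1) (hu.of_le one_le_two) (hv.of_le one_le_two),
    sub_apply, Pi.sub_apply]
  ring

theorem hestonA_const_smul (c : ℝ) (hu : ContDiffAt ℝ 2 u z) :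
    hestonA σ ρ κ θ q r (c • u) z = c * hestonA σ ρ κ θ q r u z := by
  have hcu : ContDiffAt ℝ 2 (c • u) z := hu.const_smul c
  simp only [hestonA, D1_eq_iteratedFDeriv, D2_eq_iteratedFDeriv hu, D2_eq_iteratedFDeriv hcu,
    iteratedFDeriv_const_smul_apply (i := 2) hu,
    iteratedFDeriv_const_smul_apply (i := 1) (hu.of_le one_le_two),
    smul_apply, Pi.smul_apply, smul_eq_mul]
  ring

theorem hestonA_ge_of_isLocalMax (hρ : ρ ^ 2 ≤ 1) (hz : 0 ≤ z.2) (hv : ContDiffAt ℝ 2 v z)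
    (hmax : IsLocalMax v z) : r * v z ≤ hestonA σ ρ κ θ q r v z := by
  have hfd : DifferentiableAt ℝ (fderiv ℝ v) z :=
    (hv.fderiv_right (m := 1) le_rfl).differentiableAt one_ne_zero
  have hsymm := hv.isSymmSndFDerivAt (by simp) (1, 0) (0, 1)
  have hdiag := hmax.fderiv_fderiv_apply_self_nonpos hv (1, ρ * σ)
  have hvert := hmax.fderiv_fderiv_apply_self_nonpos hv (0, 1)
  simp only [hestonA, D1, hmax.fderiv_eq_zero, D2_eq_fderiv_fderiv hfd, zero_apply]
  set B := fderiv ℝ (fderiv ℝ v) z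
  have hexpand : B (1, ρ * σ) (1, ρ * σ) = B (1, 0) (1, 0)
      + ρ * σ * (B (1, 0) (0, 1) + B (0, 1) (1, 0)) + (ρ * σ) ^ 2 * B (0, 1) (0, 1) := by
    have he : ((1 : ℝ), ρ * σ) = (1, 0) + (ρ * σ) • (0, 1) := by ext <;> simp
    rw [he]
    simp only [map_add, map_smul, add_apply, smul_apply, smul_eq_mul]
    ring
  have hprincipal :
      B (1, 0) (1, 0) + 2 * ρ * σ * B (0, 1) (1, 0) + σ ^ 2 * B (0, 1) (0, 1) ≤ 0 := by
    have hσρ : 0 ≤ σ ^ 2 * (1 - ρ ^ 2) := mul_nonneg (sq_nonneg σ) (by linarith)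
    have hsplit : B (1, 0) (1, 0) + 2 * ρ * σ * B (0, 1) (1, 0) + σ ^ 2 * B (0, 1) (0, 1)
        = B (1, ρ * σ) (1, ρ * σ) + σ ^ 2 * (1 - ρ ^ 2) * B (0, 1) (0, 1) := by
      linear_combination (-1) * hexpand - ρ * σ * hsymm
    rw [hsplit]
    linarith [mul_nonpos_of_nonneg_of_nonpos hσρ hvert]
  nlinarith [mul_nonneg hz (neg_nonneg.2 hprincipal)]

end HestonOperator

def expLinear (c₁ c₂ : ℝ) (z : ℝ × ℝ) : ℝ := exp (c₁ * z.1 + c₂ * z.2)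

def hestonSymbol (σ ρ κ θ q r c₁ c₂ y : ℝ) : ℝ :=
  -(y / 2) * (c₁ ^ 2 + 2 * ρ * σ * c₁ * c₂ + σ ^ 2 * c₂ ^ 2) - (r - q - y / 2) * c₁
    - κ * (θ - y) * c₂ + r

def hestonBarrier (m a b : ℝ) : ℝ × ℝ → ℝ := expLinear 0 m + expLinear a 0 + expLinear (-b) m

section Exponentials

variable {σ ρ κ θ q r : ℝ}

theorem expLinear_pos (c₁ c₂ : ℝ) (z : ℝ × ℝ) : 0 < expLinear c₁ c₂ z := exp_pos _

theorem contDiff_expLinear {n : WithTop ℕ∞} (c₁ c₂ : ℝ) : ContDiff ℝ n (expLinear c₁ c₂) := by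
  unfold expLinear
  fun_prop

theorem fderiv_expLinear_apply (c₁ c₂ : ℝ) (z e : ℝ × ℝ) :
    fderiv ℝ (expLinear c₁ c₂) z e = (c₁ * e.1 + c₂ * e.2) * expLinear c₁ c₂ z := by
  have hlin : HasFDerivAt (fun z : ℝ × ℝ => c₁ * z.1 + c₂ * z.2)
      (c₁ • ContinuousLinearMap.fst ℝ ℝ ℝ + c₂ • ContinuousLinearMap.snd ℝ ℝ ℝ) z :=
    (hasFDerivAt_fst.const_mul c₁).add (hasFDerivAt_snd.const_mul c₂)
  have hexp : HasFDerivAt (expLinear c₁ c₂) (expLinear c₁ c₂ z •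
      (c₁ • ContinuousLinearMap.fst ℝ ℝ ℝ + c₂ • ContinuousLinearMap.snd ℝ ℝ ℝ)) z :=
    (hasDerivAt_exp _).comp_hasFDerivAt z hlin
  rw [hexp.fderiv]
  simp only [expLinear, smul_add, add_apply, smul_apply, ContinuousLinearMap.coe_fst',
    ContinuousLinearMap.coe_snd', smul_eq_mul]
  ring

theorem hestonA_expLinear (c₁ c₂ : ℝ) (z : ℝ × ℝ) :
    hestonA σ ρ κ θ q r (expLinear c₁ c₂) z
      = expLinear c₁ c₂ z * hestonSymbol σ ρ κ θ q r c₁ c₂ z.2 := by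
  have hD2 : ∀ a b : ℝ × ℝ, D2 (expLinear c₁ c₂) z a b
      = (c₁ * a.1 + c₂ * a.2) * (c₁ * b.1 + c₂ * b.2) * expLinear c₁ c₂ z := by
    intro a b
    simp only [D2, fderiv_expLinear_apply]
    rw [fderiv_const_mul ((contDiff_expLinear (n := 1) c₁ c₂).differentiable one_ne_zero z),
      smul_apply, smul_eq_mul, fderiv_expLinear_apply]
    ring
  simp only [hestonA, D1, hD2, fderiv_expLinear_apply, hestonSymbol]
  ring

theorem hestonA_hestonBarrier (m a b : ℝ) (z : ℝ × ℝ) :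
    hestonA σ ρ κ θ q r (hestonBarrier m a b) z
      = expLinear 0 m z * hestonSymbol σ ρ κ θ q r 0 m z.2
        + expLinear a 0 z * hestonSymbol σ ρ κ θ q r a 0 z.2
        + expLinear (-b) m z * hestonSymbol σ ρ κ θ q r (-b) m z.2 := by
  have hsmooth : ∀ c₁ c₂, ContDiffAt ℝ 2 (expLinear c₁ c₂) z :=
    fun c₁ c₂ => (contDiff_expLinear c₁ c₂).contDiffAt
  rw [hestonBarrier,
    hestonA_add (u := expLinear 0 m + expLinear a 0) ((hsmooth 0 m).add (hsmooth a 0))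
      (hsmooth (-b) m),
    hestonA_add (hsmooth 0 m) (hsmooth a 0), hestonA_expLinear, hestonA_expLinear,
    hestonA_expLinear]

end Exponentials

section Growth

theorem tendsto_mul_exp_sub_mul_exp_atBot (c : ℝ) {δ α β : ℝ} (hδ : 0 < δ) (hαβ : α < β)
    (hβ : 0 < β) : Tendsto (fun t => c * exp (α * t) - δ * exp (β * t)) atTop atBot := by
  have hsplit : ∀ t, c * exp (α * t) - δ * exp (β * t)
      = -(exp (β * t) * (δ - c * exp ((α - β) * t))) := fun t => by
    rw [mul_sub, ← mul_assoc, mul_comm (exp (β * t)) c, mul_assoc, ← exp_add]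
    ring_nf
  have hdecay : Tendsto (fun t => δ - c * exp ((α - β) * t)) atTop (𝓝 δ) := by
    simpa using (tendsto_exp_atBot.comp
      (tendsto_id.const_mul_atTop_of_neg (sub_neg.2 hαβ))).const_mul c |>.const_sub δ
  simp only [hsplit]
  exact tendsto_neg_atTop_atBot.comp ((tendsto_exp_atTop.comp
    (tendsto_id.const_mul_atTop hβ)).atTop_mul_pos hδ hdecay)

theorem tendsto_cocompact_prod_add_atBot {X Y : Type*} [TopologicalSpace X] [TopologicalSpace Y]
    [Nonempty X] [Nonempty Y] {f : X → ℝ} {g : Y → ℝ} (hf : Continuous f) (hg : Continuous g)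
    (hf_lim : Tendsto f (cocompact X) atBot) (hg_lim : Tendsto g (cocompact Y) atBot) :
    Tendsto (fun p : X × Y => f p.1 + g p.2) (cocompact (X × Y)) atBot := by
  obtain ⟨x₀, hx₀⟩ := hf.exists_forall_ge hf_lim
  obtain ⟨y₀, hy₀⟩ := hg.exists_forall_ge hg_lim
  rw [← coprod_cocompact]
  refine Tendsto.sup ?_ ?_
  · exact tendsto_atBot_add_right_of_ge _ (g y₀) (f := fun p : X × Y => f p.1)
      (hf_lim.comp tendsto_comap) fun p => hy₀ p.2
  · exact tendsto_atBot_add_left_of_ge _ (f x₀) (g := fun p : X × Y => g p.2)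
      (fun p => hx₀ p.1) (hg_lim.comp tendsto_comap)

theorem exp_mul_le_one_add_exp_mul {a b : ℝ} (ha : 0 ≤ a) (hab : a ≤ b) (t : ℝ) :
    exp (a * t) ≤ 1 + exp (b * t) := by
  rcases le_total 0 t with ht | ht
  · linarith [exp_le_exp.2 (mul_le_mul_of_nonneg_right hab ht), exp_pos (b * t)]
  · linarith [exp_le_one_iff.2 (mul_nonpos_of_nonneg_of_nonpos ha ht), exp_pos (b * t)]

variable {σ κ θ r : ℝ}

theorem ellGrowth.sub {S : Set (ℝ × ℝ)} {u v : ℝ × ℝ → ℝ} (hu : ellGrowth σ κ θ r S u)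
    (hv : ellGrowth σ κ θ r S v) : ellGrowth σ κ θ r S (u - v) := by
  obtain ⟨C₁, M₁, N₁, hC₁, hM₁, hM₁', hN₁, hN₁', hu⟩ := hu
  obtain ⟨C₂, M₂, N₂, hC₂, hM₂, hM₂', hN₂, hN₂', hv⟩ := hv
  refine ⟨3 * (C₁ + C₂), max M₁ M₂, max N₁ N₂, by positivity, le_max_of_le_left hM₁,
    max_lt hM₁' hM₂', le_max_of_le_left hN₁, max_lt hN₁' hN₂', fun z hz => ?_⟩
  set G := 1 + exp (max M₁ M₂ * z.2) + exp (max N₁ N₂ * z.1)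
  have hbound : ∀ C M N : ℝ, 0 < C → 0 ≤ M → M ≤ max M₁ M₂ → 0 ≤ N → N ≤ max N₁ N₂ →
      C * (1 + exp (M * z.2) + exp (N * z.1)) ≤ 3 * C * G := fun C M N hC hM hMle hN hNle => by
    have hsum : 1 + exp (M * z.2) + exp (N * z.1) ≤ 3 * G := by
      linarith [exp_mul_le_one_add_exp_mul hM hMle z.2, exp_mul_le_one_add_exp_mul hN hNle z.1,
        exp_pos (max M₁ M₂ * z.2), exp_pos (max N₁ N₂ * z.1)]
    exact (mul_le_mul_of_nonneg_left hsum hC.le).trans_eq (by ring)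
  calc |(u - v) z| ≤ |u z| + |v z| := abs_sub _ _
    _ ≤ 3 * C₁ * G + 3 * C₂ * G := add_le_add
        ((hu z hz).trans (hbound _ _ _ hC₁ hM₁ (le_max_left _ _) hN₁ (le_max_left _ _)))
        ((hv z hz).trans (hbound _ _ _ hC₂ hM₂ (le_max_right _ _) hN₂ (le_max_right _ _)))
    _ = 3 * (C₁ + C₂) * G := by ring

end Growth

section Barrier

variable {σ ρ κ θ q r : ℝ}

theorem tendsto_growth_sub_hestonBarrier (C : ℝ) {M m a' a b δ : ℝ} (hMm : M < m) (hm : 0 < m)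
    (ha' : 0 ≤ a') (ha'a : a' < a) (hb : 0 < b) (hδ : 0 < δ) :
    Tendsto (fun z => C * (1 + exp (M * z.2) + exp (a' * z.1)) - δ * hestonBarrier m a b z)
      (cocompact (ℝ × ℝ) ⊓ 𝓟 HH) atBot := by
  set φ₁ : ℝ → ℝ := fun x => C * exp (a' * x) - δ * exp (a * x) - δ * exp (-b * x)
  set φ₂ : ℝ → ℝ := fun y => C + (C * exp (M * y) - δ * exp (m * y))
  have hφ₁_top : Tendsto φ₁ atTop atBot := by
    refine tendsto_atBot_mono (fun x => ?_)
      (tendsto_mul_exp_sub_mul_exp_atBot C hδ ha'a (ha'.trans_lt ha'a))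
    linarith [mul_pos hδ (exp_pos (-b * x))]
  have hφ₁_bot : Tendsto φ₁ atBot atBot := by
    refine tendsto_atBot_mono (fun x => ?_) ((tendsto_mul_exp_sub_mul_exp_atBot C hδ
      (by linarith : -a' < b) hb).comp tendsto_neg_atBot_atTop)
    simp only [Function.comp_apply, φ₁]
    rw [show -a' * -x = a' * x by ring, show b * -x = -b * x by ring]
    linarith [mul_pos hδ (exp_pos (a * x))]
  have hφ₁ : Tendsto φ₁ (cocompact ℝ) atBot := by
    rw [cocompact_eq_atBot_atTop]
    exact hφ₁_bot.sup hφ₁_top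
  have hφ₂ : Tendsto (fun y => φ₂ ‖y‖) (cocompact ℝ) atBot :=
    (tendsto_atBot_add_const_left _ C (tendsto_mul_exp_sub_mul_exp_atBot C hδ hMm hm)).comp
      tendsto_norm_cocompact_atTop
  refine tendsto_atBot_mono' _ ?_ ((tendsto_cocompact_prod_add_atBot (by fun_prop)
    (by fun_prop) hφ₁ hφ₂).mono_left inf_le_left)
  filter_upwards [mem_inf_of_right (mem_principal_self HH)] with z hz
  have hy : 0 < z.2 := hz
  have hcorner : exp (-b * z.1) ≤ exp (-b * z.1 + m * z.2) :=
    exp_le_exp.2 (le_add_of_nonneg_right (mul_nonneg hm.le hy.le))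
  simp only [φ₁, φ₂, Real.norm_of_nonneg hy.le, hestonBarrier, expLinear, Pi.add_apply, zero_mul,
    zero_add, add_zero]
  linarith [mul_le_mul_of_nonneg_left hcorner hδ.le]

theorem exists_hestonBarrier_params (hσ : σ ≠ 0) (hκ : 0 < κ) (hθ : 0 < θ) (hr : 0 < r)
    (hq : 0 ≤ q) {M a' : ℝ} (hM : M < min (r / (κ * θ)) (2 * κ / σ ^ 2)) (ha'₁ : a' < 1) :
    ∃ m a b, M < m ∧ 0 < m ∧ a' < a ∧ 0 < b ∧ ∀ y, 0 ≤ y →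
      0 ≤ hestonSymbol σ ρ κ θ q r 0 m y ∧ 0 ≤ hestonSymbol σ ρ κ θ q r a 0 y ∧
        0 ≤ hestonSymbol σ ρ κ θ q r (-b) m y := by
  have hmin : 0 < min (r / (κ * θ)) (2 * κ / σ ^ 2) := by positivity
  obtain ⟨m, hm, hm'⟩ := exists_between (max_lt hM hmin)
  obtain ⟨a, ha, ha₁⟩ := exists_between (max_lt ha'₁ one_pos)
  have hm₀ : 0 < m := (le_max_right _ _).trans_lt hm
  have ha₀ : 0 < a := (le_max_right _ _).trans_lt ha
  have hθm : κ * θ * m < r := by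
    have := (lt_min_iff.1 hm').1
    rwa [lt_div_iff₀ (by positivity), mul_comm] at this
  have hσm : 0 < κ - σ ^ 2 * m / 2 := by
    have := (lt_min_iff.1 hm').2
    rw [lt_div_iff₀ (by positivity)] at this
    linarith
  -- `hestonSymbol (-b) m` is affine in `y` with coefficients continuous in `b`, and both are
  -- positive at `b = 0`, so they stay positive for small `b > 0`.
  have hslope : Tendsto (fun b => m * (κ - σ ^ 2 * m / 2) + ρ * σ * b * m - b ^ 2 / 2 - b / 2)
      (𝓝 0) (𝓝 (m * (κ - σ ^ 2 * m / 2))) := by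
    simpa using ((by fun_prop : Continuous fun b : ℝ =>
      m * (κ - σ ^ 2 * m / 2) + ρ * σ * b * m - b ^ 2 / 2 - b / 2).tendsto 0)
  have hvalue : Tendsto (fun b => (r - q) * b + (r - κ * θ * m)) (𝓝 0) (𝓝 (r - κ * θ * m)) := by
    simpa using ((by fun_prop : Continuous fun b : ℝ => (r - q) * b + (r - κ * θ * m)).tendsto 0)
  have hsmall : ∀ᶠ b in 𝓝 (0 : ℝ), 0 < m * (κ - σ ^ 2 * m / 2) + ρ * σ * b * m - b ^ 2 / 2 - b / 2
      ∧ 0 < (r - q) * b + (r - κ * θ * m) :=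
    (hslope.eventually (lt_mem_nhds (mul_pos hm₀ hσm))).and
      (hvalue.eventually (lt_mem_nhds (sub_pos.2 hθm)))
  obtain ⟨b, ⟨hb_slope, hb_value⟩, hb⟩ :=
    ((hsmall.filter_mono nhdsWithin_le_nhds).and self_mem_nhdsWithin).exists (f := 𝓝[>] (0 : ℝ))
  refine ⟨m, a, b, (le_max_left _ _).trans_lt hm, hm₀, (le_max_left _ _).trans_lt ha, hb,
    fun y hy => ⟨?_, ?_, ?_⟩⟩
  · have : hestonSymbol σ ρ κ θ q r 0 m y = y * (m * (κ - σ ^ 2 * m / 2)) + (r - κ * θ * m) := by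
      simp only [hestonSymbol]; ring
    rw [this]
    nlinarith [mul_nonneg hy (mul_pos hm₀ hσm).le]
  · have : hestonSymbol σ ρ κ θ q r a 0 y = y * a * (1 - a) / 2 + r * (1 - a) + q * a := by
      simp only [hestonSymbol]; ring
    rw [this]
    have : 0 ≤ y * a * (1 - a) := mul_nonneg (mul_nonneg hy ha₀.le) (by linarith)
    nlinarith
  · have : hestonSymbol σ ρ κ θ q r (-b) m y
        = y * (m * (κ - σ ^ 2 * m / 2) + ρ * σ * b * m - b ^ 2 / 2 - b / 2)
          + ((r - q) * b + (r - κ * θ * m)) := by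
      simp only [hestonSymbol]; ring
    rw [this]
    nlinarith [mul_nonneg hy hb_slope.le]

theorem exists_hestonA_barrier (hσ : σ ≠ 0) (hκ : 0 < κ) (hθ : 0 < θ) (hr : 0 < r) (hq : 0 ≤ q)
    {M a' : ℝ} (hM : M < min (r / (κ * θ)) (2 * κ / σ ^ 2)) (ha' : 0 ≤ a') (ha'₁ : a' < 1) :
    ∃ h : ℝ × ℝ → ℝ, ContDiff ℝ 2 h ∧ (∀ z, 0 < h z) ∧
      (∀ z ∈ HH, 0 ≤ hestonA σ ρ κ θ q r h z) ∧ ∀ C δ : ℝ, 0 < δ →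
        Tendsto (fun z => C * (1 + exp (M * z.2) + exp (a' * z.1)) - δ * h z)
          (cocompact (ℝ × ℝ) ⊓ 𝓟 HH) atBot := by
  obtain ⟨m, a, b, hMm, hm, ha, hb, hsymbol⟩ :=
    exists_hestonBarrier_params (ρ := ρ) hσ hκ hθ hr hq hM ha'₁
  refine ⟨hestonBarrier m a b, ?_, fun z => ?_, fun z hz => ?_,
    fun C δ hδ => tendsto_growth_sub_hestonBarrier C hMm hm ha' ha hb hδ⟩
  · exact ((contDiff_expLinear _ _).add (contDiff_expLinear _ _)).add (contDiff_expLinear _ _)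
  · have := expLinear_pos 0 m z
    have := expLinear_pos a 0 z
    have := expLinear_pos (-b) m z
    simp only [hestonBarrier, Pi.add_apply]
    positivity
  · obtain ⟨h₁, h₂, h₃⟩ := hsymbol z.2 (le_of_lt hz)
    rw [hestonA_hestonBarrier]
    have := expLinear_pos 0 m z
    have := expLinear_pos a 0 z
    have := expLinear_pos (-b) m z
    positivity

end Barrier

section MaximumPrinciple

variable {σ ρ κ θ q r : ℝ} {O : Set (ℝ × ℝ)}

theorem nonpos_of_hestonA_nonpos_of_tendsto_atBot (hρ : ρ ^ 2 ≤ 1) (hr : 0 < r) (hO : IsOpen O)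
    (hOsub : O ⊆ HH) {v : ℝ × ℝ → ℝ} (hvc : ContinuousOn v (closure O))
    (hvd : ContDiffOn ℝ 2 v O) (hfr : ∀ z ∈ frontier O, v z ≤ 0)
    (hsub : ∀ z ∈ O, 0 < v z → hestonA σ ρ κ θ q r v z ≤ 0)
    (hlim : Tendsto v (cocompact (ℝ × ℝ) ⊓ 𝓟 O) atBot) : ∀ z ∈ closure O, v z ≤ 0 := by
  intro z₀ hz₀
  by_contra! hpos
  have hfr' : ∀ z ∈ closure O, z ∉ O → v z ≤ 0 := fun z hz hzO =>
    hfr z ⟨hz, by rwa [hO.interior_eq]⟩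
  have hev : ∀ᶠ z in cocompact (ℝ × ℝ) ⊓ 𝓟 (closure O), v z ≤ v z₀ := by
    rw [eventually_inf_principal]
    filter_upwards [eventually_inf_principal.1 (hlim.eventually (eventually_le_atBot (v z₀)))]
      with z hz hzcl
    by_cases hzO : z ∈ O
    · exact hz hzO
    · exact (hfr' z hzcl hzO).trans hpos.le
  obtain ⟨zs, hzs, hmax⟩ := hvc.exists_isMaxOn' isClosed_closure hz₀ hev
  have hvzs : 0 < v zs := hpos.trans_le (hmax hz₀)
  have hzsO : zs ∈ O := by
    by_contra hzsO
    exact (hfr' zs hzs hzsO).not_gt hvzs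
  have hloc : IsLocalMax v zs :=
    (hmax.on_subset subset_closure).isLocalMax (hO.mem_nhds hzsO)
  have hAv : r * v zs ≤ hestonA σ ρ κ θ q r v zs :=
    hestonA_ge_of_isLocalMax hρ (hOsub hzsO).le (hvd.contDiffAt (hO.mem_nhds hzsO)) hloc
  linarith [hsub zs hzsO hvzs, mul_pos hr hvzs]

theorem hestonA_weak_maximum_principle (hρ : ρ ^ 2 ≤ 1) (hσ : σ ≠ 0) (hκ : 0 < κ) (hθ : 0 < θ)
    (hr : 0 < r) (hq : 0 ≤ q) (hO : IsOpen O) (hOsub : O ⊆ HH) {w : ℝ × ℝ → ℝ}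
    (hwc : ContinuousOn w (closure O)) (hwd : ContDiffOn ℝ 2 w O) (hwg : ellGrowth σ κ θ r O w)
    (hfr : ∀ z ∈ frontier O, w z ≤ 0) (hsub : ∀ z ∈ O, 0 < w z → hestonA σ ρ κ θ q r w z ≤ 0) :
    ∀ z ∈ closure O, w z ≤ 0 := by
  obtain ⟨C, M, a', -, -, hM, ha', ha'₁, hbound⟩ := hwg
  obtain ⟨h, hh, hpos, hAh, hdom⟩ :=
    exists_hestonA_barrier (ρ := ρ) (q := q) hσ hκ hθ hr hq hM ha' ha'₁
  have hle : ∀ δ > 0, ∀ z ∈ closure O, w z ≤ δ * h z := by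
    intro δ hδ
    have hδh : ContDiff ℝ 2 (δ • h) := hh.const_smul δ
    have hv_frontier : ∀ z ∈ frontier O, (w - δ • h) z ≤ 0 := fun z hz => by
      simp only [Pi.sub_apply, Pi.smul_apply, smul_eq_mul]
      nlinarith [hfr z hz, hpos z]
    have hv_sub : ∀ z ∈ O, 0 < (w - δ • h) z → hestonA σ ρ κ θ q r (w - δ • h) z ≤ 0 := by
      intro z hz hvz
      simp only [Pi.sub_apply, Pi.smul_apply, smul_eq_mul] at hvz
      have hwz : 0 < w z := by nlinarith [hpos z]
      rw [hestonA_sub (hwd.contDiffAt (hO.mem_nhds hz)) hδh.contDiffAt,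
        hestonA_const_smul δ hh.contDiffAt]
      nlinarith [hsub z hz hwz, hAh z (hOsub hz)]
    have hv_lim : Tendsto (w - δ • h) (cocompact (ℝ × ℝ) ⊓ 𝓟 O) atBot := by
      refine tendsto_atBot_mono' _ ?_
        ((hdom C δ hδ).mono_left (inf_le_inf_left _ (principal_mono.2 hOsub)))
      filter_upwards [mem_inf_of_right (mem_principal_self O)] with z hz
      simp only [Pi.sub_apply, Pi.smul_apply, smul_eq_mul]
      linarith [le_abs_self (w z), hbound z hz]
    intro z hz
    exact sub_nonpos.1 (nonpos_of_hestonA_nonpos_of_tendsto_atBot hρ hr hO hOsub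
      (hwc.sub hδh.continuous.continuousOn) (hwd.sub hδh.contDiffOn) hv_frontier hv_sub hv_lim z hz)
  intro z hz
  refine le_of_forall_pos_le_add fun ε hε => ?_
  have := hle (ε / h z) (div_pos hε (hpos z)) z hz
  rwa [div_mul_cancel₀ _ (hpos z).ne', ← zero_add ε] at this

theorem obstacleProblem_le_of_frontier_le (hρ : ρ ^ 2 ≤ 1) (hσ : σ ≠ 0) (hκ : 0 < κ)
    (hθ : 0 < θ) (hr : 0 < r) (hq : 0 ≤ q) (hO : IsOpen O) (hOsub : O ⊆ HH)
    {f ψ u₁ u₂ : ℝ × ℝ → ℝ}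
    (hu₁c : ContinuousOn u₁ (closure O)) (hu₁d : ContDiffOn ℝ 2 u₁ O)
    (hu₁g : ellGrowth σ κ θ r O u₁) (hu₁ : obstacleProblem σ ρ κ θ q r O f ψ u₁)
    (hu₂c : ContinuousOn u₂ (closure O)) (hu₂d : ContDiffOn ℝ 2 u₂ O)
    (hu₂g : ellGrowth σ κ θ r O u₂) (hu₂ : obstacleProblem σ ρ κ θ q r O f ψ u₂)
    (hfr : ∀ z ∈ frontier O, u₁ z ≤ u₂ z) : ∀ z ∈ closure O, u₁ z ≤ u₂ z := by
  have hsub : ∀ z ∈ O, 0 < (u₁ - u₂) z → hestonA σ ρ κ θ q r (u₁ - u₂) z ≤ 0 := by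
    intro z hz hpos
    -- Where `u₁ > u₂ ≥ ψ`, the obstacle is inactive for `u₁`, so `A u₁ = f ≤ A u₂`.
    obtain ⟨-, -, hAu₁ | hψ⟩ := hu₁ z hz
    · rw [hestonA_sub (hu₁d.contDiffAt (hO.mem_nhds hz)) (hu₂d.contDiffAt (hO.mem_nhds hz)),
        hAu₁]
      linarith [(hu₂ z hz).1]
    · linarith [(hu₂ z hz).2.1, sub_pos.1 hpos]
  intro z hz
  exact sub_nonpos.1 (hestonA_weak_maximum_principle hρ hσ hκ hθ hr hq hO hOsub (hu₁c.sub hu₂c)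
    (hu₁d.sub hu₂d) (hu₁g.sub hu₂g) (fun z hz => sub_nonpos.2 (hfr z hz)) hsub z hz)

end MaximumPrinciple

theorem heston_elliptic_obstacle_uniqueness_beta_lt_one_general
    (σ ρ κ θ q r : ℝ) (hσ : σ ≠ 0) (hρ₁ : -1 < ρ) (hρ₂ : ρ < 1)
    (hκ : 0 < κ) (hθ : 0 < θ) (hr : 0 < r) (hq : 0 ≤ q)
    (O : Set (ℝ × ℝ)) (hO : IsOpen O) (hOsub : O ⊆ HH)
    (f ψ g u₁ u₂ : ℝ × ℝ → ℝ)
    (hu₁c : ContinuousOn u₁ (closure O)) (hu₁d : ContDiffOn ℝ 2 u₁ O)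
    (hu₁g : ellGrowth σ κ θ r O u₁)
    (hu₁eq : obstacleProblem σ ρ κ θ q r O f ψ u₁)
    (hu₁b : ∀ z ∈ frontier O, u₁ z = g z)
    (hu₂c : ContinuousOn u₂ (closure O)) (hu₂d : ContDiffOn ℝ 2 u₂ O)
    (hu₂g : ellGrowth σ κ θ r O u₂)
    (hu₂eq : obstacleProblem σ ρ κ θ q r O f ψ u₂)
    (hu₂b : ∀ z ∈ frontier O, u₂ z = g z) :
    EqOn u₁ u₂ (closure O) := by
  have hρ : ρ ^ 2 ≤ 1 := by nlinarith
  have hfr : ∀ z ∈ frontier O, u₁ z = u₂ z := fun z hz => (hu₁b z hz).trans (hu₂b z hz).symm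
  intro z hz
  exact le_antisymm
    (obstacleProblem_le_of_frontier_le hρ hσ hκ hθ hr hq hO hOsub hu₁c hu₁d hu₁g hu₁eq
      hu₂c hu₂d hu₂g hu₂eq (fun z hz => (hfr z hz).le) z hz)
    (obstacleProblem_le_of_frontier_le hρ hσ hκ hθ hr hq hO hOsub hu₂c hu₂d hu₂g hu₂eq
      hu₁c hu₁d hu₁g hu₁eq (fun z hz => (hfr z hz).ge) z hz)

/-- Uniqueness of solutions to the elliptic Heston obstacle problem with full Dirichlet
boundary condition, when `0 < β < 1`. -/
theorem heston_elliptic_obstacle_uniqueness_beta_lt_one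
    (σ ρ κ θ q r : ℝ) (hσ : σ ≠ 0) (hρ₁ : -1 < ρ) (hρ₂ : ρ < 1)
    (hκ : 0 < κ) (hθ : 0 < θ) (hr : 0 < r) (hq : 0 ≤ q)
    (hβ₀ : 0 < 2 * κ * θ / σ ^ 2) (hβ₁ : 2 * κ * θ / σ ^ 2 < 1)
    (O : Set (ℝ × ℝ)) (hO : IsOpen O) (hOconn : IsConnected O) (hOsub : O ⊆ HH)
    (hΓ₀ : (Gamma0 O).Nonempty)
    (f ψ g u₁ u₂ : ℝ × ℝ → ℝ)
    (hf : ContinuousOn f O) (hfg : ellGrowth σ κ θ r O f)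
    (hψ : ContinuousOn ψ (closure O)) (hψg : ellGrowth σ κ θ r (closure O) ψ)
    (hg : ContinuousOn g (frontier O)) (hgg : ellGrowth σ κ θ r (frontier O) g)
    (hψg' : ∀ z ∈ frontier O, ψ z ≤ g z)
    (hu₁c : ContinuousOn u₁ (closure O)) (hu₁d : ContDiffOn ℝ 2 u₁ O)
    (hu₁g : ellGrowth σ κ θ r O u₁)
    (hAu₁g : ellGrowth σ κ θ r O (hestonA σ ρ κ θ q r u₁))
    (hu₁eq : obstacleProblem σ ρ κ θ q r O f ψ u₁)
    (hu₁b : ∀ z ∈ frontier O, u₁ z = g z)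
    (hu₂c : ContinuousOn u₂ (closure O)) (hu₂d : ContDiffOn ℝ 2 u₂ O)
    (hu₂g : ellGrowth σ κ θ r O u₂)
    (hAu₂g : ellGrowth σ κ θ r O (hestonA σ ρ κ θ q r u₂))
    (hu₂eq : obstacleProblem σ ρ κ θ q r O f ψ u₂)
    (hu₂b : ∀ z ∈ frontier O, u₂ z = g z) :
    EqOn u₁ u₂ (closure O) :=
  heston_elliptic_obstacle_uniqueness_beta_lt_one_general σ ρ κ θ q r hσ hρ₁ hρ₂ hκ hθ hr hq O hO
    hOsub f ψ g u₁ u₂ hu₁c hu₁d hu₁g hu₁eq hu₁b hu₂c hu₂d hu₂g hu₂eq hu₂b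
end
end

section
/- Let κ > 0, θ > 0 and σ ≠ 0 be real constants, set β := 2κθ/σ² and μ := 2κ/σ², and assume β ≥ 1. Fix x > 0. Then the function y ↦ (∫_yˣ z^{−β} exp(μ z) dz) · y^{β−1} exp(−μ y) is Lebesgue integrable on the interval (0, x); equivalently, ∫₀ˣ (∫_yˣ z^{−β} e^{μ z} dz) y^{β−1} e^{−μ y} dy < ∞. -/
open Real Set MeasureTheory

/-! On `(0, x)` the exponential factors are bounded, so only the powers matter. Fix
`0 < γ ≤ β` with `γ < 1`. For `0 < y < z`, `z ^ (-β) = z ^ (γ - β) * z ^ (-γ) ≤ y ^ (γ - β) * z ^ (-γ)`,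
and `z ^ (-γ)` is integrable at `0`; hence the inner integral is `O(y ^ (γ - β))`, the integrand is
`O(y ^ (γ - 1))`, and this is integrable at `0` because `γ > 0`. -/

theorem stronglyMeasurable_setIntegral_Ioo {E : Type*} [NormedAddCommGroup E] [NormedSpace ℝ E]
    {g : ℝ → E} (hg : StronglyMeasurable g) (x : ℝ) :
    StronglyMeasurable fun y : ℝ => ∫ z in Ioo y x, g z := by
  have hS : MeasurableSet {q : ℝ × ℝ | q.1 < q.2 ∧ q.2 < x} :=
    (measurableSet_lt measurable_fst measurable_snd).inter
      (measurableSet_lt measurable_snd measurable_const)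
  have H := ((hg.comp_measurable measurable_snd).indicator hS).integral_prod_right' (ν := volume)
  convert H using 2 with y
  rw [← integral_indicator measurableSet_Ioo]
  rfl

theorem integrableOn_Ioo_zero_rpow {s : ℝ} (hs : -1 < s) (x : ℝ) :
    IntegrableOn (fun z : ℝ => z ^ s) (Ioo 0 x) :=
  (intervalIntegral.intervalIntegrable_rpow' hs).def'.mono_set fun _ hz =>
    ⟨(min_le_left _ _).trans_lt hz.1, hz.2.le.trans (le_max_right _ _)⟩

theorem norm_setIntegral_Ioo_le {g : ℝ → ℝ} {β γ K x y : ℝ} (hγβ : γ ≤ β) (hγ : γ < 1)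
    (hK : 0 ≤ K) (hy : 0 < y) (hg : ∀ z ∈ Ioo 0 x, ‖g z‖ ≤ K * z ^ (-β)) :
    ‖∫ z in Ioo y x, g z‖ ≤ K * y ^ (γ - β) * ∫ z in Ioo 0 x, z ^ (-γ) := by
  have hint := integrableOn_Ioo_zero_rpow (s := -γ) (by linarith) x
  have hsub : Ioo y x ⊆ Ioo 0 x := Ioo_subset_Ioo_left hy.le
  have hpointwise : ∀ z ∈ Ioo y x, ‖g z‖ ≤ K * y ^ (γ - β) * z ^ (-γ) := by
    intro z hz
    have hz0 : 0 < z := hy.trans hz.1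
    have hsplit : z ^ (-β) = z ^ (γ - β) * z ^ (-γ) := by
      rw [← rpow_add hz0]; ring_nf
    calc ‖g z‖ ≤ K * (z ^ (γ - β) * z ^ (-γ)) := hsplit ▸ hg z (hsub hz)
      _ ≤ K * (y ^ (γ - β) * z ^ (-γ)) :=
        mul_le_mul_of_nonneg_left (mul_le_mul_of_nonneg_right
          (rpow_le_rpow_of_nonpos hy hz.1.le (by linarith)) (rpow_nonneg hz0.le _)) hK
      _ = K * y ^ (γ - β) * z ^ (-γ) := by ring
  calc ‖∫ z in Ioo y x, g z‖ ≤ ∫ z in Ioo y x, K * y ^ (γ - β) * z ^ (-γ) :=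
        norm_integral_le_of_norm_le ((hint.mono_set hsub).const_mul _)
          ((ae_restrict_mem measurableSet_Ioo).mono hpointwise)
    _ = K * y ^ (γ - β) * ∫ z in Ioo y x, z ^ (-γ) := integral_const_mul _ _
    _ ≤ K * y ^ (γ - β) * ∫ z in Ioo 0 x, z ^ (-γ) := by
        refine mul_le_mul_of_nonneg_left (setIntegral_mono_set hint ?_ hsub.eventuallyLE)
          (mul_nonneg hK (rpow_nonneg hy.le _))
        filter_upwards [ae_restrict_mem measurableSet_Ioo] with z hz
        exact rpow_nonneg hz.1.le _

theorem integrableOn_setIntegral_Ioo_mul_of_le {g h : ℝ → ℝ} {β γ K L x : ℝ}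
    (hγβ : γ ≤ β) (hγ₀ : 0 < γ) (hγ₁ : γ < 1) (hgm : Measurable g)
    (hhm : AEStronglyMeasurable h) (hK : 0 ≤ K)
    (hg : ∀ z ∈ Ioo 0 x, ‖g z‖ ≤ K * z ^ (-β)) (hh : ∀ y ∈ Ioo 0 x, ‖h y‖ ≤ L * y ^ (β - 1)) :
    IntegrableOn (fun y => (∫ z in Ioo y x, g z) * h y) (Ioo 0 x) := by
  set I := ∫ z in Ioo 0 x, z ^ (-γ)
  have hI : 0 ≤ I := setIntegral_nonneg measurableSet_Ioo fun z hz => rpow_nonneg hz.1.le _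
  have hmeas : AEStronglyMeasurable (fun y => (∫ z in Ioo y x, g z) * h y)
      (volume.restrict (Ioo 0 x)) :=
    (stronglyMeasurable_setIntegral_Ioo hgm.stronglyMeasurable x).aestronglyMeasurable.mul
      hhm.restrict
  refine ((integrableOn_Ioo_zero_rpow (s := γ - 1) (by linarith) x).const_mul
    (K * I * L)).mono' hmeas ?_
  filter_upwards [ae_restrict_mem measurableSet_Ioo] with y hy
  rw [norm_mul]
  calc ‖∫ z in Ioo y x, g z‖ * ‖h y‖ ≤ K * y ^ (γ - β) * I * (L * y ^ (β - 1)) :=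
        mul_le_mul (norm_setIntegral_Ioo_le hγβ hγ₁ hK hy.1 hg) (hh y hy) (norm_nonneg _)
          (mul_nonneg (mul_nonneg hK (rpow_nonneg hy.1.le _)) hI)
    _ = K * I * L * (y ^ (γ - β) * y ^ (β - 1)) := by ring
    _ = K * I * L * y ^ (γ - 1) := by rw [← rpow_add hy.1]; ring_nf

theorem integrableOn_setIntegral_Ioo_mul {g h : ℝ → ℝ} {β K L x : ℝ} (hβ : 0 < β)
    (hgm : Measurable g) (hhm : AEStronglyMeasurable h) (hK : 0 ≤ K)
    (hg : ∀ z ∈ Ioo 0 x, ‖g z‖ ≤ K * z ^ (-β)) (hh : ∀ y ∈ Ioo 0 x, ‖h y‖ ≤ L * y ^ (β - 1)) :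
    IntegrableOn (fun y => (∫ z in Ioo y x, g z) * h y) (Ioo 0 x) :=
  integrableOn_setIntegral_Ioo_mul_of_le (min_le_left β (1 / 2)) (lt_min hβ one_half_pos)
    ((min_le_right _ _).trans_lt one_half_lt_one) hgm hhm hK hg hh

theorem norm_rpow_mul_exp_le {a μ x z : ℝ} (hz : 0 < z) (hzx : z ≤ x) :
    ‖z ^ a * exp (μ * z)‖ ≤ exp (|μ| * x) * z ^ a := by
  rw [norm_of_nonneg (by positivity), mul_comm]
  refine mul_le_mul_of_nonneg_right (exp_le_exp.mpr ?_) (rpow_nonneg hz.le _)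
  calc μ * z ≤ |μ| * z := by gcongr; exact le_abs_self μ
    _ ≤ |μ| * x := by gcongr

theorem feller_entrance_boundary_N0_finite_general
    (κ θ σ : ℝ)
    (hβ : 1 ≤ 2 * κ * θ / σ ^ 2) (x : ℝ) :
    IntegrableOn
      (fun y : ℝ =>
        (∫ z in Ioo y x, z ^ (-(2 * κ * θ / σ ^ 2)) * exp ((2 * κ / σ ^ 2) * z)) *
          (y ^ (2 * κ * θ / σ ^ 2 - 1) * exp (-(2 * κ / σ ^ 2) * y)))
      (Ioo 0 x) :=
  integrableOn_setIntegral_Ioo_mul (by linarith) (by fun_prop) (by fun_prop) (exp_pos _).le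
    (fun z hz => norm_rpow_mul_exp_le hz.1 hz.2.le) (fun y hy => norm_rpow_mul_exp_le hy.1 hy.2.le)

/-- When `β = 2κθ/σ² ≥ 1`, the quantity
`N(0) = ∫₀ˣ (∫_yˣ z^{−β} e^{μ z} dz) y^{β−1} e^{−μ y} dy` is finite, i.e. the function
`y ↦ (∫_yˣ z^{−β} e^{μ z} dz) · y^{β−1} e^{−μ y}` is Lebesgue integrable on `(0,x)`;
here `μ = 2κ/σ²`. This is the entrance-boundary criterion at `y = 0` for the Feller
square-root process. -/
theorem feller_entrance_boundary_N0_finite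
    (κ θ σ : ℝ) (hκ : 0 < κ) (hθ : 0 < θ) (hσ : σ ≠ 0)
    (hβ : 1 ≤ 2 * κ * θ / σ ^ 2) (x : ℝ) (hx : 0 < x) :
    IntegrableOn
      (fun y : ℝ =>
        (∫ z in Ioo y x, z ^ (-(2 * κ * θ / σ ^ 2)) * exp ((2 * κ / σ ^ 2) * z)) *
          (y ^ (2 * κ * θ / σ ^ 2 - 1) * exp (-(2 * κ / σ ^ 2) * y)))
      (Ioo 0 x) :=
  feller_entrance_boundary_N0_finite_general κ θ σ hβ x
end
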